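/- Let A be an n-by-n complex matrix with p(A) finite. If p(A) + a(A) = n, then p(A) = a(A) or p(A) ≤ a(A) − 2. -/

import Mathlib

open Matrix

noncomputable section

/-- An `ι`-by-`ι` complex matrix `A` is a *partial isometry* if `‖Ax‖ = ‖x‖` for every
vector `x` in the orthogonal complement of `ker A` (Euclidean structure). -/
def Matrix.IsPartialIsometry {ι : Type*} [Fintype ι] [DecidableEq ι]
    (A : Matrix ι ι ℂ) : Prop :=
  ∀ x ∈ (LinearMap.ker (Matrix.toEuclideanLin A))ᗮ, ‖Matrix.toEuclideanLin A x‖ = ‖x‖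

/-- The *power partial isometry index* `p(A)`: the supremum (in `ℕ∞`, possibly `⊤`) of the
nonnegative integers `j` such that `I, A, A², …, A^j` are all partial isometries. -/
def Matrix.pIndex {ι : Type*} [Fintype ι] [DecidableEq ι] (A : Matrix ι ι ℂ) : ℕ∞ :=
  sSup ((↑) '' {j : ℕ | ∀ i ≤ j, (A ^ i).IsPartialIsometry})

/-- The *ascent* `a(A)`: the smallest nonnegative integer `k` with `ker A^k = ker A^(k+1)`. -/
def Matrix.ascent {ι : Type*} [Fintype ι] [DecidableEq ι] (A : Matrix ι ι ℂ) : ℕ :=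
  sInf {k : ℕ | LinearMap.ker (Matrix.toEuclideanLin (A ^ k)) =
    LinearMap.ker (Matrix.toEuclideanLin (A ^ (k + 1)))}

/-- `A` is unitarily similar to `B` (allowing different, necessarily equipotent, index types):
`B = U* A U` for some unitary `U`. -/
def Matrix.UnitarilySimilarTo {ι κ : Type*} [Fintype ι] [Fintype κ] [DecidableEq ι]
    [DecidableEq κ] (A : Matrix ι ι ℂ) (B : Matrix κ κ ℂ) : Prop :=
  ∃ U : Matrix ι κ ℂ, Uᴴ * U = 1 ∧ U * Uᴴ = 1 ∧ B = Uᴴ * A * U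

/-- The `q`-by-`q` nilpotent Jordan block `J_q`. -/
def JordanBlock (q : ℕ) : Matrix (Fin q) (Fin q) ℂ :=
  Matrix.of fun a b => if (b : ℕ) = (a : ℕ) + 1 then 1 else 0

/-- `A` is of class `S_n`: a contraction whose eigenvalues all have moduli strictly
less than `1` and with `rank (1 - A*A) = 1`. -/
def Matrix.IsClassSn {n : ℕ} (A : Matrix (Fin n) (Fin n) ℂ) : Prop :=
  (∀ x : EuclideanSpace ℂ (Fin n), ‖Matrix.toEuclideanLin A x‖ ≤ ‖x‖) ∧
  (∀ z ∈ spectrum ℂ A, ‖z‖ < 1) ∧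
  (1 - Aᴴ * A).rank = 1

/-!
Let `T` be `A` acting on `ℂⁿ`, `K j = ker T^j`, and `p = p(A)`, so `T, …, T^p` are partial
isometries. A partial isometry `S` satisfies `‖S x‖ = ‖x‖` exactly on `(ker S)ᗮ`; hence `T` maps
`(K (j+1))ᗮ` isometrically into `(K j)ᗮ` for `j < p`. If the kernels stabilised at `a < p`, then
`(K a)ᗮ` would be `T`-invariant and every power of `T` a partial isometry, so `p ≤ a`.

It remains to exclude `a = p + 1`, i.e. `n = 2p + 1`. Let `d j` be the dimension of
`K (j+1) ⊖ K j`. For `j < p`, `T` maps `K (j+2) ⊖ K (j+1)` injectively into `K (j+1) ⊖ K j`, so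
`d` is nonincreasing up to `p`; and `d p = d (p-1)` would force `T^(p+1)` to be a partial isometry.
So `d j ≥ 2` for `j < p`, `d p ≥ 1`, and `T^(p+1) ≠ 0` gives `n > dim K (p+1) ≥ 2p + 1`.
-/

open LinearMap Submodule Module

namespace LinearMap

variable {𝕜 E F : Type*} [RCLike 𝕜] [NormedAddCommGroup E] [InnerProductSpace 𝕜 E]
  [NormedAddCommGroup F] [InnerProductSpace 𝕜 F]

def IsPartialIsometry (T : E →ₗ[𝕜] F) : Prop :=
  ∀ x ∈ (ker T)ᗮ, ‖T x‖ = ‖x‖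

theorem isPartialIsometry_of_ker_eq_top {T : E →ₗ[𝕜] F} (h : ker T = ⊤) :
    T.IsPartialIsometry := by
  intro x hx
  rw [h, Submodule.top_orthogonal_eq_bot, Submodule.mem_bot] at hx
  simp [hx]

theorem isPartialIsometry_id : (LinearMap.id : E →ₗ[𝕜] E).IsPartialIsometry :=
  fun _ _ => rfl

theorem IsPartialIsometry.inner_map_map {T : E →ₗ[𝕜] F} (hT : T.IsPartialIsometry) {x y : E}
    (hx : x ∈ (ker T)ᗮ) (hy : y ∈ (ker T)ᗮ) : inner 𝕜 (T x) (T y) = inner 𝕜 x y :=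
  LinearIsometry.inner_map_map ⟨T ∘ₗ (ker T)ᗮ.subtype, fun z => hT z z.2⟩ ⟨x, hx⟩ ⟨y, hy⟩

theorem IsPartialIsometry.injOn {T : E →ₗ[𝕜] F} (hT : T.IsPartialIsometry) :
    Set.InjOn T (ker T)ᗮ := by
  intro x hx y hy hxy
  rw [← sub_eq_zero, ← norm_eq_zero, ← hT _ (sub_mem hx hy), map_sub, hxy, sub_self, norm_zero]

variable [FiniteDimensional 𝕜 E]

theorem map_starProjection_orthogonal_ker (T : E →ₗ[𝕜] F) (x : E) :
    T ((ker T)ᗮ.starProjection x) = T x := by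
  conv_rhs => rw [← (ker T).starProjection_add_starProjection_orthogonal x]
  rw [map_add, mem_ker.mp ((ker T).starProjection_apply_mem x), zero_add]

theorem IsPartialIsometry.norm_map {T : E →ₗ[𝕜] F} (hT : T.IsPartialIsometry) (x : E) :
    ‖T x‖ = ‖(ker T)ᗮ.starProjection x‖ := by
  rw [← map_starProjection_orthogonal_ker, hT _ ((ker T)ᗮ.starProjection_apply_mem x)]

theorem IsPartialIsometry.norm_map_le {T : E →ₗ[𝕜] F} (hT : T.IsPartialIsometry) (x : E) :
    ‖T x‖ ≤ ‖x‖ :=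
  hT.norm_map x ▸ (ker T)ᗮ.norm_starProjection_apply_le x

theorem IsPartialIsometry.norm_map_eq_iff {T : E →ₗ[𝕜] F} (hT : T.IsPartialIsometry) {x : E} :
    ‖T x‖ = ‖x‖ ↔ x ∈ (ker T)ᗮ := by
  rw [hT.norm_map, ← mem_iff_norm_starProjection]

end LinearMap

namespace Module.End

variable {𝕜 E : Type*} [RCLike 𝕜] [NormedAddCommGroup E] [InnerProductSpace 𝕜 E]

theorem ker_pow_le_ker_pow {R M : Type*} [Semiring R] [AddCommMonoid M] [Module R M]
    (T : End R M) {i j : ℕ} (hij : i ≤ j) : ker (T ^ i) ≤ ker (T ^ j) := by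
  rw [← Nat.sub_add_cancel hij, pow_add]
  exact ker_le_ker_comp _ _

theorem ker_le_ker_pow_succ {R M : Type*} [Semiring R] [AddCommMonoid M] [Module R M]
    (T : End R M) (j : ℕ) : ker T ≤ ker (T ^ (j + 1)) := by
  simpa using T.ker_pow_le_ker_pow (Nat.le_add_left 1 j)

def kerPowIncrement (T : End 𝕜 E) (j : ℕ) : Submodule 𝕜 E :=
  (ker (T ^ j))ᗮ ⊓ ker (T ^ (j + 1))

theorem kerPowIncrement_succ_le_orthogonal_ker (T : End 𝕜 E) (j : ℕ) :
    T.kerPowIncrement (j + 1) ≤ (ker T)ᗮ :=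
  inf_le_left.trans (orthogonal_le (T.ker_le_ker_pow_succ j))

variable [FiniteDimensional 𝕜 E]

theorem finrank_kerPowIncrement_pos {T : End 𝕜 E} {j : ℕ}
    (hker : ker (T ^ j) ≠ ker (T ^ (j + 1))) : 0 < finrank 𝕜 (T.kerPowIncrement j) := by
  have hle := T.ker_pow_le_ker_pow (Nat.le_add_right j 1)
  have hsplit := finrank_add_inf_finrank_orthogonal hle
  by_contra! h0
  exact hker (eq_of_le_of_finrank_eq hle (by rw [kerPowIncrement] at h0; omega))

theorem finrank_ker_pow_eq_sum (T : End 𝕜 E) (m : ℕ) :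
    finrank 𝕜 (ker (T ^ m)) = ∑ j ∈ Finset.range m, finrank 𝕜 (T.kerPowIncrement j) := by
  induction m with
  | zero => simp [one_eq_id]
  | succ m ih =>
    rw [Finset.sum_range_succ, ← ih, kerPowIncrement,
      finrank_add_inf_finrank_orthogonal (T.ker_pow_le_ker_pow m.le_succ)]

end Module.End

namespace LinearMap.IsPartialIsometry

open Module.End

variable {𝕜 E : Type*} [RCLike 𝕜] [NormedAddCommGroup E] [InnerProductSpace 𝕜 E]
  [FiniteDimensional 𝕜 E] {T : Module.End 𝕜 E}

theorem mapsTo_orthogonal_ker_pow {j : ℕ} (hT : T.IsPartialIsometry)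
    (hj : (T ^ j).IsPartialIsometry) (hj1 : (T ^ (j + 1)).IsPartialIsometry) :
    Set.MapsTo T (ker (T ^ (j + 1)))ᗮ (ker (T ^ j))ᗮ := by
  intro x hx
  rw [SetLike.mem_coe, ← hj.norm_map_eq_iff]
  refine le_antisymm (hj.norm_map_le _) ?_
  calc ‖T x‖ ≤ ‖x‖ := hT.norm_map_le x
    _ = ‖(T ^ (j + 1)) x‖ := (hj1 x hx).symm
    _ = ‖(T ^ j) (T x)‖ := by rw [pow_succ, Module.End.mul_apply]

theorem pow_of_ker_pow_eq {a m : ℕ} (hT : T.IsPartialIsometry)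
    (ha : (T ^ a).IsPartialIsometry) (ha1 : (T ^ (a + 1)).IsPartialIsometry)
    (hker : ker (T ^ a) = ker (T ^ (a + 1))) (hm : a ≤ m) : (T ^ m).IsPartialIsometry := by
  set M := (ker (T ^ a))ᗮ
  have hmaps : Set.MapsTo T M M := by
    simpa only [M, hker] using hT.mapsTo_orthogonal_ker_pow ha ha1
  have hiso : ∀ x ∈ M, ‖T x‖ = ‖x‖ := fun x hx =>
    calc ‖T x‖ = ‖(T ^ a) (T x)‖ := (ha _ (hmaps hx)).symm
      _ = ‖(T ^ (a + 1)) x‖ := by rw [pow_succ, Module.End.mul_apply]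
      _ = ‖x‖ := ha1 x (hker ▸ hx)
  have hpow : ∀ i, ∀ x ∈ M, ‖(T ^ i) x‖ = ‖x‖ := by
    intro i
    induction i with
    | zero => simp
    | succ i ih => intro x hx; rw [pow_succ, Module.End.mul_apply, ih _ (hmaps hx), hiso x hx]
  rw [← Nat.add_sub_cancel' hm, IsPartialIsometry, ← ker_pow_constant hker]
  exact hpow _

theorem mapsTo_kerPowIncrement {j : ℕ} (hT : T.IsPartialIsometry)
    (hj : (T ^ j).IsPartialIsometry) (hj1 : (T ^ (j + 1)).IsPartialIsometry) :
    Set.MapsTo T (T.kerPowIncrement (j + 1)) (T.kerPowIncrement j) := by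
  rintro w ⟨hw, hw2⟩
  refine ⟨hT.mapsTo_orthogonal_ker_pow hj hj1 hw, ?_⟩
  rw [SetLike.mem_coe, mem_ker, ← Module.End.mul_apply, ← pow_succ]
  exact hw2

theorem restrict_kerPowIncrement_injective {j : ℕ} (hT : T.IsPartialIsometry)
    (hj : (T ^ j).IsPartialIsometry) (hj1 : (T ^ (j + 1)).IsPartialIsometry) :
    Function.Injective (T.restrict (hT.mapsTo_kerPowIncrement hj hj1)) := fun u v huv =>
  Subtype.ext <| hT.injOn (T.kerPowIncrement_succ_le_orthogonal_ker j u.2)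
    (T.kerPowIncrement_succ_le_orthogonal_ker j v.2) (congrArg Subtype.val huv)

theorem finrank_kerPowIncrement_succ_le {j : ℕ} (hT : T.IsPartialIsometry)
    (hj : (T ^ j).IsPartialIsometry) (hj1 : (T ^ (j + 1)).IsPartialIsometry) :
    finrank 𝕜 (T.kerPowIncrement (j + 1)) ≤ finrank 𝕜 (T.kerPowIncrement j) :=
  finrank_le_finrank_of_injective (hT.restrict_kerPowIncrement_injective hj hj1)

theorem pow_add_two_of_finrank_kerPowIncrement_le {j : ℕ} (hT : T.IsPartialIsometry)
    (hj : (T ^ j).IsPartialIsometry) (hj1 : (T ^ (j + 1)).IsPartialIsometry)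
    (hdim : finrank 𝕜 (T.kerPowIncrement j) ≤ finrank 𝕜 (T.kerPowIncrement (j + 1))) :
    (T ^ (j + 2)).IsPartialIsometry := by
  -- Equal dimensions make `T` map `kerPowIncrement (j+1)` onto `kerPowIncrement j`, so
  -- `ker T^(j+1) = ker T^j ⊔ T (kerPowIncrement (j+1))`; for `x ⊥ ker T^(j+2)`, `T x` is
  -- orthogonal to both parts.
  have hinj := hT.restrict_kerPowIncrement_injective hj hj1
  have hsurj := (injective_iff_surjective_of_finrank_eq_finrank
    (le_antisymm (finrank_le_finrank_of_injective hinj) hdim)).mp hinj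
  intro x hx
  have hx1 : x ∈ (ker (T ^ (j + 1)))ᗮ := orthogonal_le (T.ker_pow_le_ker_pow (j + 1).le_succ) hx
  have hxT : x ∈ (ker T)ᗮ := orthogonal_le (T.ker_le_ker_pow_succ (j + 1)) hx
  have hTx : T x ∈ (ker (T ^ (j + 1)))ᗮ := by
    rw [← sup_orthogonal_inf_of_hasOrthogonalProjection (T.ker_pow_le_ker_pow j.le_succ),
      ← inf_orthogonal]
    refine ⟨hT.mapsTo_orthogonal_ker_pow hj hj1 hx1, fun v hv => ?_⟩
    obtain ⟨w, hw⟩ := hsurj ⟨v, hv⟩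
    rw [← show T w = v from congrArg Subtype.val hw,
      hT.inner_map_map (T.kerPowIncrement_succ_le_orthogonal_ker j w.2) hxT]
    exact (mem_orthogonal _ x).mp hx w w.2.2
  calc ‖(T ^ (j + 2)) x‖ = ‖(T ^ (j + 1)) (T x)‖ := by rw [pow_succ, Module.End.mul_apply]
    _ = ‖T x‖ := hj1 _ hTx
    _ = ‖x‖ := hT x hxT

end LinearMap.IsPartialIsometry

namespace Module.End

variable {𝕜 E : Type*} [RCLike 𝕜] [NormedAddCommGroup E] [InnerProductSpace 𝕜 E]
  [FiniteDimensional 𝕜 E]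

theorem finrank_kerPowIncrement_le_of_le {T : End 𝕜 E} {t i j : ℕ}
    (hpi : ∀ k ≤ t, (T ^ k).IsPartialIsometry) (hij : i ≤ j) (hjt : j ≤ t) :
    finrank 𝕜 (T.kerPowIncrement j) ≤ finrank 𝕜 (T.kerPowIncrement i) := by
  induction j, hij using Nat.le_induction with
  | base => rfl
  | succ j _ ih =>
    have hT : T.IsPartialIsometry := by simpa using hpi 1 (by omega)
    exact (hT.finrank_kerPowIncrement_succ_le (hpi j (by omega)) (hpi (j + 1) hjt)).trans
      (ih (by omega))

theorem two_mul_add_two_le_finrank {T : End 𝕜 E} {t : ℕ}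
    (hpi : ∀ i ≤ t, (T ^ i).IsPartialIsometry) (hker : ker (T ^ t) ≠ ker (T ^ (t + 1)))
    (hnpi : ¬ (T ^ (t + 1)).IsPartialIsometry) : 2 * t + 2 ≤ finrank 𝕜 E := by
  have hdt := finrank_kerPowIncrement_pos hker
  have hlt : finrank 𝕜 (ker (T ^ (t + 1))) < finrank 𝕜 E :=
    finrank_lt fun h => hnpi (isPartialIsometry_of_ker_eq_top h)
  have hd2 : ∀ j < t, 2 ≤ finrank 𝕜 (T.kerPowIncrement j) := by
    obtain _ | s := t
    · simp
    have hT : T.IsPartialIsometry := by simpa using hpi 1 (by omega)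
    have hstrict : finrank 𝕜 (T.kerPowIncrement (s + 1)) < finrank 𝕜 (T.kerPowIncrement s) :=
      lt_of_not_ge fun h => hnpi <| hT.pow_add_two_of_finrank_kerPowIncrement_le
        (hpi s (by omega)) (hpi (s + 1) le_rfl) h
    intro j hj
    have := finrank_kerPowIncrement_le_of_le hpi (Nat.lt_succ_iff.mp hj) (Nat.le_succ s)
    omega
  have hsum := Finset.card_nsmul_le_sum (Finset.range t) _ 2
    fun j hj => hd2 j (Finset.mem_range.mp hj)
  rw [Finset.card_range, smul_eq_mul] at hsum
  rw [finrank_ker_pow_eq_sum, Finset.sum_range_succ] at hlt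
  omega

end Module.End

namespace Matrix

variable {ι : Type*} [Fintype ι] [DecidableEq ι] (A : Matrix ι ι ℂ)

theorem isPartialIsometry_pow_iff (i : ℕ) :
    (A ^ i).IsPartialIsometry ↔ (toEuclideanLin A ^ i).IsPartialIsometry := by
  rw [Matrix.IsPartialIsometry, toLpLin_pow]
  rfl

theorem exists_pIndex_eq_of_ne_top (hfin : A.pIndex ≠ ⊤) :
    ∃ k : ℕ, A.pIndex = k ∧ (∀ i ≤ k, (toEuclideanLin A ^ i).IsPartialIsometry) ∧
      ¬ (toEuclideanLin A ^ (k + 1)).IsPartialIsometry := by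
  set S := {j : ℕ | ∀ i ≤ j, (A ^ i).IsPartialIsometry}
  have h0 : 0 ∈ S := fun i hi => by
    rw [Nat.le_zero.mp hi, isPartialIsometry_pow_iff, pow_zero]
    exact isPartialIsometry_id
  have : Nonempty (((↑) : ℕ → ℕ∞) '' S) := ⟨⟨0, 0, h0, rfl⟩⟩
  obtain ⟨k, hk, hkeq⟩ := ENat.sSup_mem_of_nonempty_of_lt_top (s := (↑) '' S) (by exact hfin.lt_top)
  refine ⟨k, hkeq.symm, fun i hi => (A.isPartialIsometry_pow_iff i).mp (hk i hi), fun hpi => ?_⟩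
  have hk1 : k + 1 ∈ S := fun i hi => (Nat.le_succ_iff.mp hi).elim (hk i)
    fun h => h ▸ (A.isPartialIsometry_pow_iff _).mpr hpi
  have : ((k + 1 : ℕ) : ℕ∞) ≤ k := hkeq ▸ le_sSup (Set.mem_image_of_mem _ hk1)
  norm_cast at this
  omega

theorem ker_pow_ascent_eq :
    ker (toEuclideanLin A ^ A.ascent) = ker (toEuclideanLin A ^ (A.ascent + 1)) := by
  have hne : {k : ℕ | ker (toEuclideanLin (A ^ k)) = ker (toEuclideanLin (A ^ (k + 1)))}.Nonempty :=
    ⟨finrank ℂ (EuclideanSpace ℂ ι), show ker (toEuclideanLin (A ^ _)) = _ by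
      rw [toLpLin_pow, toLpLin_pow]
      exact (Module.End.ker_pow_eq_ker_pow_finrank_of_le (Nat.le_add_right _ 1)).symm⟩
  rw [← toLpLin_pow, ← toLpLin_pow]
  exact Nat.sInf_mem hne

theorem ascent_le_of_ker_pow_eq {k : ℕ}
    (h : ker (toEuclideanLin A ^ k) = ker (toEuclideanLin A ^ (k + 1))) : A.ascent ≤ k :=
  Nat.sInf_le (show ker (toEuclideanLin (A ^ k)) = ker (toEuclideanLin (A ^ (k + 1))) by
    rwa [toLpLin_pow, toLpLin_pow])

end Matrix

/-- **Lemma 3.3 (b).** If `A` is an `n`-by-`n` complex matrix with `p(A)` finite and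
`p(A) + a(A) = n`, then `p(A) = a(A)` or `p(A) ≤ a(A) - 2`. -/
theorem pIndex_eq_or_le_of_add_eq (n : ℕ) (A : Matrix (Fin n) (Fin n) ℂ)
    (hfin : A.pIndex ≠ ⊤) (h : A.pIndex + (A.ascent : ℕ∞) = (n : ℕ∞)) :
    A.pIndex = (A.ascent : ℕ∞) ∨ A.pIndex + 2 ≤ (A.ascent : ℕ∞) := by
  obtain ⟨k, hk, hpi, hnpi⟩ := A.exists_pIndex_eq_of_ne_top hfin
  rw [hk] at h ⊢
  norm_cast at h ⊢
  have hka : k ≤ A.ascent := by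
    by_contra! hlt
    have hT : (toEuclideanLin A).IsPartialIsometry := by simpa using hpi 1 (by omega)
    exact hnpi (hT.pow_of_ker_pow_eq (hpi _ hlt.le) (hpi _ hlt) A.ker_pow_ascent_eq (by omega))
  have hak : A.ascent ≠ k + 1 := by
    intro ha
    have hstep : ker (toEuclideanLin A ^ k) ≠ ker (toEuclideanLin A ^ (k + 1)) := fun hk' => by
      have := A.ascent_le_of_ker_pow_eq hk'
      omega
    have := Module.End.two_mul_add_two_le_finrank hpi hstep hnpi
    rw [finrank_euclideanSpace_fin] at this
    omega
  omega
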